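/- arXiv:2209.13087 — 12 statements merged into one kernel-verified Lean document; each statement's English description precedes it below -/
import Mathlib

section
/- For every d ∈ (0,1), the WENO-M mapping function g_M is strictly monotonically increasing on the interval [0,1]. -/
lemma denom_pos (d : ℝ) (hd0 : 0 < d) (hd1 : d < 1) (x : ℝ) (hx0 : 0 ≤ x) (hx1 : x ≤ 1) :
    0 < d ^ 2 + x * (1 - 2 * d) := by
  rcases le_or_gt (1 - 2 * d) 0 with h | h
  · nlinarith [mul_nonneg (sub_nonneg.2 hx1) (neg_nonneg.2 h), sq_nonneg (1 - d)]
  · nlinarith [mul_nonneg hx0 h.le, mul_pos hd0 hd0]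

lemma P_pos (d x y : ℝ) (hd0 : 0 < d) (hd1 : d < 1) (hx0 : 0 ≤ x) (hx1 : x ≤ 1)
    (hy0 : 0 ≤ y) (hy1 : y ≤ 1) (hxy : x < y) :
    0 < d * (1 - d) * ((x - d) ^ 2 + (x - d) * (y - d) + (y - d) ^ 2)
      + (1 - 2 * d) * (x - d) * (y - d) * (x + y - 2 * d) := by
  have hab : (0:ℝ) < (y - d) - (x - d) := by linarith
  have hS : 0 < (x-d) ^ 2 + (x-d) * (y-d) + (y-d) ^ 2 := by
    nlinarith [sq_nonneg (x+y-2*d), sq_nonneg (x - y), sub_pos.2 hxy]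
  have hU : 0 ≤ d * ((x-d) ^ 2 + (x-d) * (y-d) + (y-d) ^ 2) + (x-d) * (y-d) * (x+y-2*d) := by
    rcases le_or_gt 0 (x+y-2*d) with h | h
    · have hb0 : 0 ≤ y - d := by nlinarith [sub_pos.2 hxy]
      -- U = x * (b * (a+b)) + d * a^2
      nlinarith [mul_nonneg hx0 (mul_nonneg hb0 h), mul_nonneg hd0.le (sq_nonneg (x-d))]
    · have ha0 : x - d ≤ 0 := by nlinarith [sub_pos.2 hxy]
      -- U = y * (a * (a+b)) + d * b^2
      nlinarith [mul_nonneg hy0 (mul_nonneg (neg_nonneg.2 ha0) (neg_nonneg.2 h.le)),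
        mul_nonneg hd0.le (sq_nonneg (y-d))]
  have hV : 0 ≤ (1 - d) * ((x-d) ^ 2 + (x-d) * (y-d) + (y-d) ^ 2) - (x-d) * (y-d) * (x+y-2*d) := by
    rcases le_or_gt 0 (x+y-2*d) with h | h
    · have hb0 : 0 ≤ y - d := by nlinarith [sub_pos.2 hxy]
      -- V = (1－x) * (b * (a+b)) + (1-d) * a^2
      nlinarith [mul_nonneg (sub_nonneg.2 hx1) (mul_nonneg hb0 h),
        mul_nonneg (sub_pos.2 hd1).le (sq_nonneg (x-d))]
    · have ha0 : x - d ≤ 0 := by nlinarith [sub_pos.2 hxy]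
      -- V = (1-y) * (a * (a+b)) + (1-d) * b^2
      nlinarith [mul_nonneg (sub_nonneg.2 hy1) (mul_nonneg (neg_nonneg.2 ha0) (neg_nonneg.2 h.le)),
        mul_nonneg (sub_pos.2 hd1).le (sq_nonneg (y-d))]
  rcases le_or_gt 0 (1 - 2 * d) with h | h
  · -- P = d^2 * S + (1-2d) * U
    nlinarith [mul_nonneg h hU, mul_pos (mul_pos hd0 hd0) hS]
  · -- P = (1-d)^2 * S + (2d-1) * V
    nlinarith [mul_nonneg (by linarith : (0:ℝ) ≤ 2 * d - 1) hV,
      mul_pos (mul_pos (sub_pos.2 hd1) (sub_pos.2 hd1)) hS]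

/-- For every `d ∈ (0,1)`, the WENO-M mapping function
`g_M(ω) = ω(d + d² − 3dω + ω²)/(d² + ω(1 − 2d))` is strictly monotonically
increasing on the interval `[0,1]`. -/
theorem stmt1 (d : ℝ) (hd : d ∈ Set.Ioo (0 : ℝ) 1)
    (gM : ℝ → ℝ)
    (hgM : ∀ ω : ℝ, gM ω = ω * (d + d ^ 2 - 3 * d * ω + ω ^ 2) / (d ^ 2 + ω * (1 - 2 * d))) :
    StrictMonoOn gM (Set.Icc (0 : ℝ) 1) := by
  obtain ⟨hd0, hd1⟩ := hd
  intro x hx y hy hxy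
  rw [hgM, hgM]
  have hDx := denom_pos d hd0 hd1 x hx.1 hx.2
  have hDy := denom_pos d hd0 hd1 y hy.1 hy.2
  rw [div_lt_div_iff₀ hDx hDy]
  have hP := P_pos d x y hd0 hd1 hx.1 hx.2 hy.1 hy.2 hxy
  nlinarith [mul_pos (sub_pos.2 hxy) hP]
end

section
/- Let d ∈ (0,1) and let ω : ℝ → ℝ be a function such that ω(h) − d = O(h) as h → 0. Then g_M(ω(h)) − d = O(h³) as h → 0, i.e., the WENO-M map improves the order of agreement with the ideal weight d from first order to third order. -/
/-! The WENO-M map satisfies `g_M(ω) - d = (ω - d)³ / (d² + ω(1 - 2d))`, and the denominator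
tends to `d(1 - d) ≠ 0` as `ω → d`; so a first-order error in `ω` becomes a third-order one. -/

open Filter Topology Asymptotics

lemma wenoM_sub_eq {d ω : ℝ} (hden : d ^ 2 + ω * (1 - 2 * d) ≠ 0) :
    ω * (d + d ^ 2 - 3 * d * ω + ω ^ 2) / (d ^ 2 + ω * (1 - 2 * d)) - d =
      (ω - d) ^ 3 * (d ^ 2 + ω * (1 - 2 * d))⁻¹ := by
  rw [← div_eq_mul_inv, eq_div_iff hden, sub_mul, div_mul_cancel₀ _ hden]
  ring

/-- Let `d ∈ (0,1)` and let `ω : ℝ → ℝ` be a function such that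
`ω(h) − d = O(h)` as `h → 0`.  Then `g_M(ω(h)) − d = O(h³)` as `h → 0`:
the WENO-M map improves the order of agreement with the ideal weight `d`
from first order to third order. -/
theorem stmt2 (d : ℝ) (hd : d ∈ Set.Ioo (0 : ℝ) 1)
    (gM : ℝ → ℝ)
    (hgM : ∀ ω : ℝ, gM ω = ω * (d + d ^ 2 - 3 * d * ω + ω ^ 2) / (d ^ 2 + ω * (1 - 2 * d)))
    (ω : ℝ → ℝ)
    (hω : (fun h : ℝ => ω h - d) =O[nhds 0] fun h : ℝ => h) :
    (fun h : ℝ => gM (ω h) - d) =O[nhds 0] fun h : ℝ => h ^ 3 := by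
  obtain ⟨hd0, hd1⟩ := hd
  have hω_lim : Tendsto ω (𝓝 0) (𝓝 d) := by
    simpa using (hω.trans_tendsto tendsto_id).add_const d
  have hden_lim : Tendsto (fun h => d ^ 2 + ω h * (1 - 2 * d)) (𝓝 0) (𝓝 (d * (1 - d))) := by
    convert (hω_lim.mul_const (1 - 2 * d)).const_add (d ^ 2) using 2
    ring
  have hden_ne : d * (1 - d) ≠ 0 := mul_ne_zero hd0.ne' (sub_ne_zero.2 hd1.ne')
  have hinv : (fun h => (d ^ 2 + ω h * (1 - 2 * d))⁻¹) =O[𝓝 0] fun _ => (1 : ℝ) :=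
    (hden_lim.inv₀ hden_ne).isBigO_one ℝ
  have heq : (fun h => gM (ω h) - d) =ᶠ[𝓝 0]
      fun h => (ω h - d) ^ 3 * (d ^ 2 + ω h * (1 - 2 * d))⁻¹ := by
    filter_upwards [hden_lim.eventually_ne hden_ne] with h hh
    rw [hgM, wenoM_sub_eq hh]
  simpa using heq.trans_isBigO ((hω.pow 3).mul hinv)
end

section
/- For every d ∈ (0,1) and every integer n ≥ 2, the piecewise WENO-PM mapping function g_PM is monotonically nondecreasing on the interval [0,1]. -/
/-!
On each side of `d` the derivative of `g_PM` factors as a positive constant times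
`ω (d - ω)ⁿ` on `[0, d]` and `(ω - d)ⁿ (1 - ω)` on `[d, 1]`, so both branches are monotone;
both branches take the value `d` at `ω = d`, so they glue to a monotone function on `[0, 1]`.
-/

open Set

noncomputable def pmBranch (c₁ c₂ d : ℝ) (n : ℕ) (ω : ℝ) : ℝ :=
  c₁ * (ω - d) ^ (n + 1) * (ω + c₂) + d

@[simp]
lemma pmBranch_self (c₁ c₂ d : ℝ) (n : ℕ) : pmBranch c₁ c₂ d n d = d := by
  simp [pmBranch]

lemma hasDerivAt_pmBranch (c₁ c₂ d : ℝ) (n : ℕ) (x : ℝ) :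
    HasDerivAt (pmBranch c₁ c₂ d n) (c₁ * (x - d) ^ n * ((n + 1) * (x + c₂) + (x - d))) x := by
  have h := ((((hasDerivAt_id' x).sub_const d).fun_pow (n + 1)).const_mul c₁).fun_mul
    ((hasDerivAt_id' x).add_const c₂)
  refine (h.add_const d).congr_deriv ?_
  rw [Nat.add_sub_cancel]
  push_cast
  ring

lemma monotoneOn_pmBranch {c₁ c₂ d a b : ℝ} {n : ℕ}
    (h : ∀ x ∈ Ioo a b, 0 ≤ c₁ * (x - d) ^ n * ((n + 1) * (x + c₂) + (x - d))) :
    MonotoneOn (pmBranch c₁ c₂ d n) (Icc a b) :=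
  monotoneOn_of_hasDerivWithinAt_nonneg (convex_Icc a b)
    (fun x _ => (hasDerivAt_pmBranch c₁ c₂ d n x).continuousAt.continuousWithinAt)
    (fun x _ => (hasDerivAt_pmBranch c₁ c₂ d n x).hasDerivWithinAt)
    (by simpa only [interior_Icc] using h)

lemma monotoneOn_pmBranch_left {d : ℝ} (hd : 0 < d) (n : ℕ) :
    MonotoneOn (pmBranch ((-1) ^ n * ((n : ℝ) + 1) / d ^ (n + 1)) (d / ((n : ℝ) + 1)) d n)
      (Icc 0 d) := by
  refine monotoneOn_pmBranch fun x hx => ?_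
  have hfactor : (-1) ^ n * ((n : ℝ) + 1) / d ^ (n + 1) * (x - d) ^ n *
      ((n + 1) * (x + d / ((n : ℝ) + 1)) + (x - d)) =
      ((n : ℝ) + 1) * (n + 2) / d ^ (n + 1) * (d - x) ^ n * x := by
    rw [show d - x = -(x - d) by ring, neg_pow (x - d)]
    field_simp
    ring
  rw [hfactor]
  have hdx : 0 ≤ d - x := by linarith [hx.2]
  exact mul_nonneg (mul_nonneg (by positivity) (pow_nonneg hdx n)) hx.1.le

lemma monotoneOn_pmBranch_right {d : ℝ} (hd : d < 1) (n : ℕ) :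
    MonotoneOn (pmBranch (-((n : ℝ) + 1) / (1 - d) ^ (n + 1))
      ((d - (n : ℝ) - 2) / ((n : ℝ) + 1)) d n) (Icc d 1) := by
  refine monotoneOn_pmBranch fun x hx => ?_
  have hd' : 0 < 1 - d := by linarith
  have hfactor : -((n : ℝ) + 1) / (1 - d) ^ (n + 1) * (x - d) ^ n *
      ((n + 1) * (x + (d - (n : ℝ) - 2) / ((n : ℝ) + 1)) + (x - d)) =
      ((n : ℝ) + 1) * (n + 2) / (1 - d) ^ (n + 1) * (x - d) ^ n * (1 - x) := by
    field_simp
    ring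
  rw [hfactor]
  have hxd : 0 ≤ x - d := by linarith [hx.1]
  exact mul_nonneg (mul_nonneg (by positivity) (pow_nonneg hxd n)) (by linarith [hx.2])

theorem stmt4_general (d : ℝ) (hd : d ∈ Set.Ioo (0 : ℝ) 1) (n : ℕ)
    (gPM : ℝ → ℝ)
    (hgPM : ∀ ω : ℝ, gPM ω =
      if ω ≤ d then
        ((-1) ^ n * ((n : ℝ) + 1) / d ^ (n + 1)) * (ω - d) ^ (n + 1) * (ω + d / ((n : ℝ) + 1)) + d
      else
        (-((n : ℝ) + 1) / (1 - d) ^ (n + 1)) * (ω - d) ^ (n + 1) *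
          (ω + (d - (n : ℝ) - 2) / ((n : ℝ) + 1)) + d) :
    MonotoneOn gPM (Set.Icc (0 : ℝ) 1) := by
  obtain ⟨hd0, hd1⟩ := hd
  have hleft : MonotoneOn gPM (Icc 0 d) := (monotoneOn_pmBranch_left hd0 n).congr fun ω hω => by
    rw [hgPM, if_pos hω.2, pmBranch]
  have hright : MonotoneOn gPM (Icc d 1) := (monotoneOn_pmBranch_right hd1 n).congr fun ω hω => by
    rw [hgPM]
    split_ifs with hωd
    · obtain rfl := le_antisymm hωd hω.1
      simp
    · rw [pmBranch]
  rw [← Icc_union_Icc_eq_Icc hd0.le hd1.le]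
  exact hleft.union_right hright (isGreatest_Icc hd0.le) (isLeast_Icc hd1.le)

/-- For every `d ∈ (0,1)` and every integer `n ≥ 2`, the piecewise
WENO-PM mapping function is monotonically nondecreasing on `[0,1]`. -/
theorem stmt4 (d : ℝ) (hd : d ∈ Set.Ioo (0 : ℝ) 1) (n : ℕ) (hn : 2 ≤ n)
    (gPM : ℝ → ℝ)
    (hgPM : ∀ ω : ℝ, gPM ω =
      if ω ≤ d then
        ((-1) ^ n * ((n : ℝ) + 1) / d ^ (n + 1)) * (ω - d) ^ (n + 1) * (ω + d / ((n : ℝ) + 1)) + d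
      else
        (-((n : ℝ) + 1) / (1 - d) ^ (n + 1)) * (ω - d) ^ (n + 1) *
          (ω + (d - (n : ℝ) - 2) / ((n : ℝ) + 1)) + d) :
    MonotoneOn gPM (Set.Icc (0 : ℝ) 1) :=
  stmt4_general d hd n gPM hgPM
end

section
/- For every d ∈ (0,1) and every integer n ≥ 2: (i) g_PM(ω) − d = O((ω − d)^{n+1}) as ω → d, so all derivatives of g_PM at d up to order n vanish; and (ii) the derivative at ω = 1 of the right branch polynomial p(ω) = c₁(ω − d)^{n+1}(ω + c₂) + d (with c₁ = −(n+1)/(1−d)^{n+1}, c₂ = (d − n − 2)/(n+1)) satisfies p′(1) = 0. -/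
/-!
Both branches of `g_PM` have the form `d + (ω - d)^(n+1) · (affine in ω)`, so each agrees with
the constant `d` to order `n` at `ω = d`. Gluing two smooth functions at a point where their
derivatives up to order `n` match yields a function whose derivatives up to order `n` are computed
branchwise, hence vanish at `d`. For the endpoint condition,
`p'(1) = c₁ (1 - d)^n ((n + 1)(1 + c₂) + 1 - d)` and `(n + 1)(1 + c₂) = d - 1`.
-/

open Polynomial Filter Asymptotics Topology

theorem Asymptotics.IsBigO.ite {α E F : Type*} [Norm E] [SeminormedAddCommGroup F]
    {l : Filter α} {p : α → Prop} [DecidablePred p] {f g : α → F} {k : α → E}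
    (hf : f =O[l] k) (hg : g =O[l] k) :
    (fun x => if p x then f x else g x) =O[l] k := by
  refine (isBigO_of_le l fun x => ?_).trans (hf.norm_left.add hg.norm_left)
  rw [Real.norm_of_nonneg (by positivity)]
  split_ifs
  · exact le_add_of_nonneg_right (norm_nonneg _)
  · exact le_add_of_nonneg_left (norm_nonneg _)

section Field

variable {𝕜 : Type*} [NontriviallyNormedField 𝕜]

theorem Polynomial.iteratedDeriv_eval (p : 𝕜[X]) (k : ℕ) :
    iteratedDeriv k (fun x => p.eval x) = fun x => (derivative^[k] p).eval x := by
  induction k with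
  | zero => simp
  | succ k ih =>
    ext x
    rw [iteratedDeriv_succ, ih, Polynomial.deriv, Function.iterate_succ_apply']

theorem Polynomial.iteratedDeriv_eval_eq_of_pow_dvd_sub
    {p q : 𝕜[X]} {t : 𝕜} {m j : ℕ} (h : (X - C t) ^ m ∣ p - q) (hj : j < m) :
    iteratedDeriv j (fun x => p.eval x) t = iteratedDeriv j (fun x => q.eval x) t := by
  have hroot : (derivative^[j] (p - q)).IsRoot t :=
    dvd_iff_isRoot.mp <| (dvd_pow_self _ (Nat.sub_ne_zero_of_lt hj)).trans
      (pow_sub_dvd_iterate_derivative_of_pow_dvd j h)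
  rw [iterate_derivative_sub, IsRoot, eval_sub, sub_eq_zero] at hroot
  simpa only [iteratedDeriv_eval] using hroot

theorem iteratedDeriv_mul_pow_mul_add_const (a b c t : 𝕜) {n j : ℕ} (hj : j ≤ n) :
    iteratedDeriv j (fun x => a * (x - t) ^ (n + 1) * (x + b) + c) t
      = iteratedDeriv j (fun _ => c) t := by
  have h := iteratedDeriv_eval_eq_of_pow_dvd_sub (t := t) (j := j)
    (m := n + 1) (p := C a * (X - C t) ^ (n + 1) * (X + C b) + C c) (q := C c)
    ⟨C a * (X + C b), by rw [add_sub_cancel_right]; ring⟩ (by omega)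
  simpa using h

theorem hasDerivAt_mul_pow_mul_add_const (a b c t x : 𝕜) (m : ℕ) :
    HasDerivAt (fun x => a * (x - t) ^ (m + 1) * (x + b) + c)
      (a * (x - t) ^ m * ((m + 1) * (x + b) + (x - t))) x := by
  have hprod := ((((hasDerivAt_id' x).sub_const t).fun_pow (m + 1)).const_mul a |>.fun_mul
    ((hasDerivAt_id' x).add_const b)).add_const c
  refine hprod.congr_deriv ?_
  push_cast
  ring

theorem isBigO_mul_pow_mul (a b t : 𝕜) (m : ℕ) :
    (fun x => a * (x - t) ^ m * (x + b)) =O[𝓝 t] fun x => (x - t) ^ m := by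
  have hbdd : (fun x => a * (x + b)) =O[𝓝 t] fun _ => (1 : 𝕜) :=
    (Continuous.tendsto (by fun_prop) t).isBigO_one 𝕜
  have hprod := (isBigO_refl (fun x => (x - t) ^ m) (𝓝 t)).mul hbdd
  refine (hprod.congr_left fun x => ?_).congr_right fun x => ?_ <;> ring

end Field

section Gluing

variable {F : Type*} [NormedAddCommGroup F] [NormedSpace ℝ F]

theorem hasDerivAt_ite_le {f g : ℝ → F} {f' : F} {a : ℝ}
    (hf : HasDerivAt f f' a) (hg : HasDerivAt g f' a) (h : f a = g a) :
    HasDerivAt (fun x => if x ≤ a then f x else g x) f' a := by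
  rw [hasDerivAt_iff_tendsto_slope] at hf hg ⊢
  rw [← nhdsLT_sup_nhdsGT, tendsto_sup]
  constructor
  · refine (hf.mono_left (nhdsWithin_mono _ fun x hx => ne_of_lt hx)).congr' ?_
    filter_upwards [self_mem_nhdsWithin] with x (hx : x < a)
    simp [slope_def_module, hx.le]
  · refine (hg.mono_left (nhdsWithin_mono _ fun x hx => ne_of_gt hx)).congr' ?_
    filter_upwards [self_mem_nhdsWithin] with x (hx : a < x)
    simp [slope_def_module, not_le.2 hx, h]

theorem deriv_ite_le {f g : ℝ → F} {a : ℝ}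
    (hf : Differentiable ℝ f) (hg : Differentiable ℝ g)
    (h₀ : f a = g a) (h₁ : deriv f a = deriv g a) :
    deriv (fun x => if x ≤ a then f x else g x)
      = fun x => if x ≤ a then deriv f x else deriv g x := by
  ext x
  rcases lt_trichotomy x a with hx | rfl | hx
  · rw [if_pos hx.le]
    refine ((hf x).hasDerivAt.congr_of_eventuallyEq ?_).deriv
    filter_upwards [Iio_mem_nhds hx] with y (hy : y < a)
    simp [hy.le]
  · rw [if_pos le_rfl]
    exact (hasDerivAt_ite_le (hf x).hasDerivAt (h₁ ▸ (hg x).hasDerivAt) h₀).deriv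
  · rw [if_neg (not_le.2 hx)]
    refine ((hg x).hasDerivAt.congr_of_eventuallyEq ?_).deriv
    filter_upwards [Ioi_mem_nhds hx] with y (hy : a < y)
    simp [not_le.2 hy]

open scoped ContDiff in
theorem iteratedDeriv_ite_le {f g : ℝ → F} {a : ℝ} {m : ℕ}
    (hf : ContDiff ℝ ∞ f) (hg : ContDiff ℝ ∞ g)
    (h : ∀ j ≤ m, iteratedDeriv j f a = iteratedDeriv j g a) {k : ℕ} (hk : k ≤ m) :
    iteratedDeriv k (fun x => if x ≤ a then f x else g x)
      = fun x => if x ≤ a then iteratedDeriv k f x else iteratedDeriv k g x := by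
  induction k with
  | zero => simp
  | succ k ih =>
    rw [iteratedDeriv_succ, ih (by omega), iteratedDeriv_succ, iteratedDeriv_succ]
    have hk_lt : (k : ℕ∞ω) < ∞ := by exact_mod_cast WithTop.coe_lt_top _
    exact deriv_ite_le (hf.differentiable_iteratedDeriv k hk_lt)
      (hg.differentiable_iteratedDeriv k hk_lt) (h k (by omega))
      (by rw [← iteratedDeriv_succ, ← iteratedDeriv_succ]; exact h (k + 1) hk)

end Gluing

theorem stmt5_general (d : ℝ) (n : ℕ)
    (gPM : ℝ → ℝ)
    (hgPM : ∀ ω : ℝ, gPM ω =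
      if ω ≤ d then
        ((-1) ^ n * ((n : ℝ) + 1) / d ^ (n + 1)) * (ω - d) ^ (n + 1) * (ω + d / ((n : ℝ) + 1)) + d
      else
        (-((n : ℝ) + 1) / (1 - d) ^ (n + 1)) * (ω - d) ^ (n + 1) *
          (ω + (d - (n : ℝ) - 2) / ((n : ℝ) + 1)) + d)
    (p : ℝ → ℝ)
    (hp : ∀ ω : ℝ, p ω =
      (-((n : ℝ) + 1) / (1 - d) ^ (n + 1)) * (ω - d) ^ (n + 1) *
        (ω + (d - (n : ℝ) - 2) / ((n : ℝ) + 1)) + d) :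
    ((fun ω : ℝ => gPM ω - d) =O[nhds d] fun ω : ℝ => (ω - d) ^ (n + 1)) ∧
    (∀ k : ℕ, 1 ≤ k → k ≤ n → iteratedDeriv k gPM d = 0) ∧
    deriv p 1 = 0 := by
  refine ⟨?_, fun k hk₁ hkn => ?_, ?_⟩
  · have hsub : (fun ω => gPM ω - d) = fun ω => if ω ≤ d
        then (-1) ^ n * ((n : ℝ) + 1) / d ^ (n + 1) * (ω - d) ^ (n + 1) *
          (ω + d / ((n : ℝ) + 1))
        else -((n : ℝ) + 1) / (1 - d) ^ (n + 1) * (ω - d) ^ (n + 1) *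
          (ω + (d - (n : ℝ) - 2) / ((n : ℝ) + 1)) := by
      funext ω
      rw [hgPM]
      split_ifs <;> ring
    rw [hsub]
    exact (isBigO_mul_pow_mul _ _ _ _).ite (isBigO_mul_pow_mul _ _ _ _)
  · have hbranch (a b : ℝ) {j : ℕ} (hj : j ≤ n) :
        iteratedDeriv j (fun ω => a * (ω - d) ^ (n + 1) * (ω + b) + d) d
          = iteratedDeriv j (fun _ => d) d :=
      iteratedDeriv_mul_pow_mul_add_const a b d d hj
    rw [funext hgPM, iteratedDeriv_ite_le (by fun_prop) (by fun_prop)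
      (fun j hj => (hbranch _ _ hj).trans (hbranch _ _ hj).symm) hkn]
    simp [hbranch _ _ hkn, iteratedDeriv_const, Nat.one_le_iff_ne_zero.mp hk₁]
  · rw [funext hp, (hasDerivAt_mul_pow_mul_add_const _ _ _ _ 1 n).deriv]
    have hcancel : ((n : ℝ) + 1) * (1 + (d - n - 2) / (n + 1)) + (1 - d) = 0 := by
      field_simp
      ring
    rw [hcancel, mul_zero]

/-- For every `d ∈ (0,1)` and every integer `n ≥ 2`:
(i) `g_PM(ω) − d = O((ω − d)^{n+1})` as `ω → d`, so all derivatives of `g_PM`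
at `d` up to order `n` vanish; and (ii) the derivative at `ω = 1` of the right
branch polynomial `p(ω) = c₁(ω − d)^{n+1}(ω + c₂) + d` (with
`c₁ = −(n+1)/(1−d)^{n+1}`, `c₂ = (d − n − 2)/(n+1)`) satisfies `p′(1) = 0`. -/
theorem stmt5 (d : ℝ) (hd : d ∈ Set.Ioo (0 : ℝ) 1) (n : ℕ) (hn : 2 ≤ n)
    (gPM : ℝ → ℝ)
    (hgPM : ∀ ω : ℝ, gPM ω =
      if ω ≤ d then
        ((-1) ^ n * ((n : ℝ) + 1) / d ^ (n + 1)) * (ω - d) ^ (n + 1) * (ω + d / ((n : ℝ) + 1)) + d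
      else
        (-((n : ℝ) + 1) / (1 - d) ^ (n + 1)) * (ω - d) ^ (n + 1) *
          (ω + (d - (n : ℝ) - 2) / ((n : ℝ) + 1)) + d)
    (p : ℝ → ℝ)
    (hp : ∀ ω : ℝ, p ω =
      (-((n : ℝ) + 1) / (1 - d) ^ (n + 1)) * (ω - d) ^ (n + 1) *
        (ω + (d - (n : ℝ) - 2) / ((n : ℝ) + 1)) + d) :
    ((fun ω : ℝ => gPM ω - d) =O[nhds d] fun ω : ℝ => (ω - d) ^ (n + 1)) ∧
    (∀ k : ℕ, 1 ≤ k → k ≤ n → iteratedDeriv k gPM d = 0) ∧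
    deriv p 1 = 0 :=
  stmt5_general d n gPM hgPM p hp
end

section
/- Let d ∈ (0,1), let n be a positive even integer and let m be an integer with 1 ≤ m ≤ n. With the WENO-RM coefficients aᵢ = C(n+1, i)·(−d)^{n−i} for i = 0,…,m and a_{m+1} = (1−d)^n − Σ_{i=0}^{m} aᵢ, the polynomial Q(X) = Σ_{i=0}^{m+1} aᵢ Xⁱ satisfies: (i) X^{m+1} divides the polynomial (X − d)^{n+1} + d·Q(X); (ii) Q(0) = dⁿ; and (iii) Q(1) = (1 − d)ⁿ. -/
open Polynomial

/-- Let `d ∈ (0,1)`, `n` a positive even integer and `m` an integer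
with `1 ≤ m ≤ n`.  With the WENO-RM coefficients `aᵢ = C(n+1,i)·(−d)^{n−i}` for
`i = 0,…,m` and `a_{m+1} = (1−d)ⁿ − Σ_{i=0}^{m} aᵢ`, the polynomial
`Q(X) = Σ_{i=0}^{m+1} aᵢ Xⁱ` satisfies: (i) `X^{m+1}` divides the polynomial
`(X − d)^{n+1} + d·Q(X)`; (ii) `Q(0) = dⁿ`; and (iii) `Q(1) = (1 − d)ⁿ`. -/
theorem stmt7 (d : ℝ) (hd : d ∈ Set.Ioo (0 : ℝ) 1) (n m : ℕ)
    (hn : 0 < n) (hne : Even n) (hm : 1 ≤ m) (hmn : m ≤ n)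
    (a : ℕ → ℝ)
    (ha : ∀ i ≤ m, a i = ((n + 1).choose i : ℝ) * (-d) ^ (n - i))
    (ham : a (m + 1) = (1 - d) ^ n - ∑ i ∈ Finset.range (m + 1), a i)
    (Q : Polynomial ℝ)
    (hQ : Q = ∑ i ∈ Finset.range (m + 2), Polynomial.C (a i) * Polynomial.X ^ i) :
    (Polynomial.X ^ (m + 1) ∣ ((Polynomial.X - Polynomial.C d) ^ (n + 1) + Polynomial.C d * Q)) ∧
    Q.eval 0 = d ^ n ∧ Q.eval 1 = (1 - d) ^ n := by
  have hcoeff : ∀ i < m + 2, Q.coeff i = a i := by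
    intro i hi
    rw [hQ, Polynomial.finset_sum_coeff]
    simp only [Polynomial.coeff_C_mul, Polynomial.coeff_X_pow, mul_ite, mul_one, mul_zero]
    rw [Finset.sum_ite_eq (Finset.range (m + 2)) i a, if_pos (Finset.mem_range.mpr hi)]
  refine ⟨?_, ?_, ?_⟩
  · rw [Polynomial.X_pow_dvd_iff]
    intro i hi
    have hi' : i ≤ m := Nat.lt_succ_iff.mp hi
    rw [Polynomial.coeff_add, Polynomial.coeff_C_mul,
      hcoeff i (lt_trans hi (by omega)), ha i hi',
      sub_eq_add_neg, ← Polynomial.C_neg, Polynomial.coeff_X_add_C_pow]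
    have h1 : n + 1 - i = (n - i) + 1 := by omega
    rw [h1]
    ring
  · rw [hQ]
    simp only [Polynomial.eval_finset_sum, Polynomial.eval_mul, Polynomial.eval_C,
      Polynomial.eval_pow, Polynomial.eval_X]
    rw [Finset.sum_eq_single 0]
    · rw [pow_zero, mul_one, ha 0 (by omega), Nat.choose_zero_right, Nat.sub_zero,
        hne.neg_pow]
      simp
    · intro b _ hb
      simp [zero_pow hb]
    · simp
  · rw [hQ]
    simp only [Polynomial.eval_finset_sum, Polynomial.eval_mul, Polynomial.eval_C,
      Polynomial.eval_pow, Polynomial.eval_X, one_pow, mul_one]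
    rw [Finset.sum_range_succ, ham]
    ring
end

section
/- Let d ∈ (0,1), let n be a positive even integer and let m be an integer with 1 ≤ m ≤ n, and assume Q(d) ≠ 0. Then the WENO-RM mapping function satisfies g_RM(0) = 0, g_RM(d) = d, g_RM(1) = 1, and g_RM(ω) = O(ω^{m+1}) as ω → 0 (so g_RM and its derivatives up to order m vanish at 0). -/
/-!
Near `0` we have `g_RM = (d Q + (ω - d)^(n+1)) / Q`. The coefficients `a₀, …, a_m` are exactly
those that make the terms of degree `≤ m` of `d Q` cancel against those of `(ω - d)^(n+1)`, so
`X^(m+1)` divides the numerator, and `Q(0) = d^n ≠ 0` keeps the quotient `O(ω^(m+1))`.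
The choice of `a_{m+1}` makes `Q(1) = (1 - d)^n`, whence `g_RM(1) = 1`.
-/

open Polynomial Finset Filter Asymptotics Topology

theorem X_pow_dvd_C_mul_add_X_sub_C_pow {R : Type*} [CommRing R] (d : R) {n m : ℕ} (hmn : m ≤ n)
    {q : R[X]} (hq : ∀ i ≤ m, q.coeff i = (n + 1).choose i * (-d) ^ (n - i)) :
    X ^ (m + 1) ∣ C d * q + (X - C d) ^ (n + 1) := by
  refine X_pow_dvd_iff.2 fun i hi => ?_
  rw [coeff_add, coeff_C_mul, hq i (by omega), sub_eq_add_neg, ← C_neg, coeff_X_add_C_pow,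
    show n + 1 - i = n - i + 1 by omega, pow_succ]
  ring

theorem isBigO_const_add_eval_div_eval {𝕜 : Type*} [NontriviallyNormedField 𝕜] {c : 𝕜}
    {p q : 𝕜[X]} {k : ℕ} (hdvd : X ^ k ∣ C c * q + p) (hq : q.eval 0 ≠ 0) :
    (fun x => c + p.eval x / q.eval x) =O[𝓝 0] fun x => x ^ k := by
  obtain ⟨r, hr⟩ := hdvd
  have hq_near : ∀ᶠ x in 𝓝 (0 : 𝕜), q.eval x ≠ 0 :=
    q.continuous.continuousAt.eventually_ne hq
  have hfactor : (fun x => c + p.eval x / q.eval x) =ᶠ[𝓝 0]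
      fun x => x ^ k * (r.eval x / q.eval x) := by
    filter_upwards [hq_near] with x hx
    have := congrArg (eval x) hr
    simp only [eval_add, eval_mul, eval_C, eval_pow, eval_X] at this
    rw [mul_div_assoc', ← this]
    field_simp
  have hbounded : (fun x => r.eval x / q.eval x) =O[𝓝 0] fun _ => (1 : 𝕜) :=
    (r.continuous.continuousAt.div q.continuous.continuousAt hq).isBigO_one 𝕜
  refine hfactor.trans_isBigO ?_
  simpa using (isBigO_refl (fun x : 𝕜 => x ^ k) (𝓝 0)).mul hbounded

theorem stmt8_general (d : ℝ) (hd : d ∈ Set.Ioo (0 : ℝ) 1) (n m : ℕ)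
    (hne : Even n) (hmn : m ≤ n)
    (a : ℕ → ℝ)
    (ha : ∀ i ≤ m, a i = ((n + 1).choose i : ℝ) * (-d) ^ (n - i))
    (ham : a (m + 1) = (1 - d) ^ n - ∑ i ∈ Finset.range (m + 1), a i)
    (Q : ℝ → ℝ)
    (hQ : ∀ ω : ℝ, Q ω = ∑ i ∈ Finset.range (m + 2), a i * ω ^ i)
    (gRM : ℝ → ℝ)
    (hgRM : ∀ ω : ℝ, gRM ω = d + (ω - d) ^ (n + 1) / Q ω) :
    gRM 0 = 0 ∧ gRM d = d ∧ gRM 1 = 1 ∧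
    (gRM =O[nhds 0] fun ω : ℝ => ω ^ (m + 1)) := by
  obtain ⟨hd0, hd1⟩ := hd
  set q : ℝ[X] := ∑ i ∈ range (m + 2), C (a i) * X ^ i
  have hq_coeff (i : ℕ) (hi : i < m + 2) : q.coeff i = a i := by simp [q, hi]
  have hQq (ω : ℝ) : Q ω = q.eval ω := by simp [q, hQ, eval_finsetSum]
  have hQ0 : Q 0 = d ^ n := by
    rw [hQq, ← coeff_zero_eq_eval_zero, hq_coeff 0 (by omega), ha 0 (by omega)]
    simp [hne.neg_pow]
  have hQ1 : Q 1 = (1 - d) ^ n := by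
    simp [hQ, sum_range_succ _ (m + 1), ham]
  refine ⟨?_, by simp [hgRM], ?_, ?_⟩
  · rw [hgRM, hQ0, zero_sub, pow_succ, hne.neg_pow]
    field_simp
    ring
  · rw [hgRM, hQ1, pow_succ]
    field_simp [show 1 - d ≠ 0 by linarith]
    ring
  · have hdvd := X_pow_dvd_C_mul_add_X_sub_C_pow d hmn fun i hi =>
      (hq_coeff i (by omega)).trans (ha i hi)
    have hq0 : q.eval 0 ≠ 0 := by rw [← hQq, hQ0]; positivity
    have hg : gRM = fun ω => d + ((X - C d) ^ (n + 1)).eval ω / q.eval ω :=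
      funext fun ω => by simp [hgRM, hQq]
    exact hg ▸ isBigO_const_add_eval_div_eval hdvd hq0

/-- Let `d ∈ (0,1)`, `n` a positive even integer, `m` an integer with
`1 ≤ m ≤ n`, and assume `Q(d) ≠ 0`.  Then the WENO-RM mapping function
`g_RM(ω) = d + (ω − d)^{n+1}/Q(ω)` satisfies `g_RM(0) = 0`, `g_RM(d) = d`,
`g_RM(1) = 1`, and `g_RM(ω) = O(ω^{m+1})` as `ω → 0` (so `g_RM` and its
derivatives up to order `m` vanish at `0`). -/
theorem stmt8 (d : ℝ) (hd : d ∈ Set.Ioo (0 : ℝ) 1) (n m : ℕ)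
    (hn : 0 < n) (hne : Even n) (hm : 1 ≤ m) (hmn : m ≤ n)
    (a : ℕ → ℝ)
    (ha : ∀ i ≤ m, a i = ((n + 1).choose i : ℝ) * (-d) ^ (n - i))
    (ham : a (m + 1) = (1 - d) ^ n - ∑ i ∈ Finset.range (m + 1), a i)
    (Q : ℝ → ℝ)
    (hQ : ∀ ω : ℝ, Q ω = ∑ i ∈ Finset.range (m + 2), a i * ω ^ i)
    (hQd : Q d ≠ 0)
    (gRM : ℝ → ℝ)
    (hgRM : ∀ ω : ℝ, gRM ω = d + (ω - d) ^ (n + 1) / Q ω) :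
    gRM 0 = 0 ∧ gRM d = d ∧ gRM 1 = 1 ∧
    (gRM =O[nhds 0] fun ω : ℝ => ω ^ (m + 1)) :=
  stmt8_general d hd n m hne hmn a ha ham Q hQ gRM hgRM
end

section
/- Let d ∈ (0,1), let n be a positive even integer and let s > 0. Suppose φ : ℝ → ℝ is differentiable on [0,1], satisfies φ(0) = φ(1) = 0 and φ(ω) > 0 for all ω ∈ (0,1), and that (n+1)φ(ω) − φ′(ω)(ω − d) ≥ 0 for all ω ∈ [0,1]. Then the generalized adaptive mapping function g is monotonically nondecreasing on [0,1]. -/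
/-- Let `d ∈ (0,1)`, `n` a positive even integer and `s > 0`.
Suppose `φ : ℝ → ℝ` is differentiable on `[0,1]`, satisfies `φ(0) = φ(1) = 0`
and `φ(ω) > 0` for all `ω ∈ (0,1)`, and that
`(n+1)φ(ω) − φ′(ω)(ω − d) ≥ 0` for all `ω ∈ [0,1]`.  Then the generalized
adaptive mapping function `g(ω) = d + (ω − d)^{n+1}/((ω − d)ⁿ + s·φ(ω))` is
monotonically nondecreasing on `[0,1]`. -/
theorem stmt10 (d : ℝ) (hd : d ∈ Set.Ioo (0 : ℝ) 1) (n : ℕ) (hn : 0 < n) (hne : Even n)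
    (s : ℝ) (hs : 0 < s) (φ : ℝ → ℝ)
    (hφdiff : ∀ x ∈ Set.Icc (0 : ℝ) 1, DifferentiableAt ℝ φ x)
    (hφ0 : φ 0 = 0) (hφ1 : φ 1 = 0)
    (hφpos : ∀ x ∈ Set.Ioo (0 : ℝ) 1, 0 < φ x)
    (hcond : ∀ x ∈ Set.Icc (0 : ℝ) 1, 0 ≤ ((n : ℝ) + 1) * φ x - deriv φ x * (x - d))
    (g : ℝ → ℝ)
    (hg : ∀ x : ℝ, g x = d + (x - d) ^ (n + 1) / ((x - d) ^ n + s * φ x)) :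
    MonotoneOn g (Set.Icc (0 : ℝ) 1) := by
  obtain ⟨m, rfl⟩ : ∃ m, n = m + 1 := ⟨n - 1, by omega⟩
  have hgeq : g = fun x => d + (x - d) ^ (m + 1 + 1) / ((x - d) ^ (m + 1) + s * φ x) :=
    funext hg
  -- denominator positive on Icc
  have hD : ∀ x ∈ Set.Icc (0 : ℝ) 1, 0 < (x - d) ^ (m + 1) + s * φ x := by
    intro x hx
    rcases eq_or_lt_of_le hx.1 with h0 | h0
    · rw [← h0, hφ0]
      have h : (0:ℝ) - d ≠ 0 := by intro h; rw [sub_eq_zero] at h; linarith [hd.1]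
      have := hne.pow_pos h
      linarith
    rcases eq_or_lt_of_le hx.2 with h1 | h1
    · rw [h1, hφ1]
      have hne1 : (1:ℝ) - d ≠ 0 := by have := hd.2; intro h; linarith [sub_eq_zero.mp h]
      have := hne.pow_pos hne1
      linarith
    · have hφx := hφpos x ⟨h0, h1⟩
      have := hne.pow_nonneg (x - d)
      nlinarith
  have hder : ∀ x ∈ Set.Ioo (0 : ℝ) 1,
      HasDerivAt g
        (((↑(m+1+1) : ℝ) * (x - d) ^ (m + 1) * 1 * ((x - d) ^ (m + 1) + s * φ x)
          - (x - d) ^ (m + 1 + 1) * ((↑(m+1) : ℝ) * (x - d) ^ m * 1 + s * deriv φ x))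
          / ((x - d) ^ (m + 1) + s * φ x) ^ 2) x := by
    intro x hx
    have hxI : x ∈ Set.Icc (0:ℝ) 1 := Set.mem_Icc_of_Ioo hx
    have hφ := (hφdiff x hxI).hasDerivAt
    have h1 : HasDerivAt (fun x => (x - d) ^ (m + 1 + 1))
        ((↑(m+1+1) : ℝ) * (x - d) ^ (m + 1) * 1) x :=
      ((hasDerivAt_id x).sub_const d).pow _
    have h2 : HasDerivAt (fun x => (x - d) ^ (m + 1) + s * φ x)
        ((↑(m+1) : ℝ) * (x - d) ^ m * 1 + s * deriv φ x) x :=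
      (((hasDerivAt_id x).sub_const d).pow _).add (hφ.const_mul s)
    have := ((h1.div h2 (ne_of_gt (hD x hxI))).const_add d)
    rw [hgeq]
    exact this
  rw [hgeq]
  apply monotoneOn_of_deriv_nonneg (convex_Icc 0 1)
  · have hφc : ContinuousOn φ (Set.Icc (0:ℝ) 1) :=
      fun x hx => (hφdiff x hx).continuousAt.continuousWithinAt
    apply continuousOn_const.add
    apply ContinuousOn.div
    · exact (Continuous.pow (by continuity) _).continuousOn
    · exact ((Continuous.pow (by continuity) _).continuousOn).add
        (continuousOn_const.mul hφc)
    · exact fun x hx => ne_of_gt (hD x hx)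
  · rw [interior_Icc, ← hgeq]
    exact fun x hx => ((hder x hx).differentiableAt).differentiableWithinAt
  · rw [interior_Icc, ← hgeq]
    intro x hx
    have hxI : x ∈ Set.Icc (0:ℝ) 1 := Set.mem_Icc_of_Ioo hx
    rw [(hder x hx).deriv]
    apply div_nonneg _ (sq_nonneg _)
    have hnum : ((↑(m+1+1) : ℝ) * (x - d) ^ (m + 1) * 1 * ((x - d) ^ (m + 1) + s * φ x)
          - (x - d) ^ (m + 1 + 1) * ((↑(m+1) : ℝ) * (x - d) ^ m * 1 + s * deriv φ x))
        = ((x - d) ^ (m+1)) ^ 2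
          + s * (x - d) ^ (m+1) * (((m:ℝ) + 1 + 1) * φ x - deriv φ x * (x - d)) := by
      push_cast
      ring
    rw [hnum]
    have h1 := sq_nonneg ((x - d) ^ (m+1))
    have h2 := hne.pow_nonneg (x - d)
    have h3 := hcond x hxI
    push_cast at h3 ⊢
    nlinarith [mul_nonneg (mul_nonneg hs.le h2) h3]
end

section
/- Let d ∈ (0,1), let n be a positive even integer and let s > 0, and let φ : ℝ → ℝ. If φ is differentiable at 0 with φ(0) = 0 and φ′(0) = 0, then the generalized adaptive mapping function g is differentiable at 0 with g′(0) = 1; likewise, if φ is differentiable at 1 with φ(1) = 0 and φ′(1) = 0, then g is differentiable at 1 with g′(1) = 1. -/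
/-! Writing `(x - d) ^ (n + 1) = (x - d) * (x - d) ^ n`, the map is `d + (x - d) v / (v + ψ)`
with `v = (x - d) ^ n` and `ψ = s φ`. Where `v ≠ 0` and `ψ` vanishes to first order, the quotient
rule gives derivative `((v + (a - d) v') v - (a - d) v v') / v² = 1`, whatever `v'` is. At
`a = 0` and `a = 1` we have `v a ≠ 0` because `d ∈ (0, 1)`. -/

theorem hasDerivAt_const_add_sub_mul_div_add {c a v' : ℝ} {v ψ : ℝ → ℝ}
    (hv : HasDerivAt v v' a) (hva : v a ≠ 0) (hψ : HasDerivAt ψ 0 a) (hψa : ψ a = 0) :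
    HasDerivAt (fun x => c + (x - c) * v x / (v x + ψ x)) 1 a := by
  have hnum : HasDerivAt (fun x => (x - c) * v x) (1 * v a + (a - c) * v') a :=
    ((hasDerivAt_id a).sub_const c).mul hv
  have hden : HasDerivAt (fun x => v x + ψ x) (v' + 0) a := hv.add hψ
  have hdiv := (hnum.div hden (by rwa [hψa, add_zero])).const_add c
  refine hdiv.congr_deriv ?_
  rw [hψa, add_zero, add_zero]
  field_simp
  ring

theorem hasDerivAt_adaptiveMap {d s a : ℝ} (n : ℕ) {φ : ℝ → ℝ} (ha : a ≠ d)
    (hφ : HasDerivAt φ 0 a) (hφa : φ a = 0) :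
    HasDerivAt (fun x => d + (x - d) ^ (n + 1) / ((x - d) ^ n + s * φ x)) 1 a := by
  have hv : HasDerivAt (fun x => (x - d) ^ n) (n * (a - d) ^ (n - 1) * 1) a :=
    ((hasDerivAt_id a).sub_const d).pow n
  have hψ : HasDerivAt (fun x => s * φ x) 0 a := by simpa using hφ.const_mul s
  simpa only [pow_succ', mul_comm] using
    hasDerivAt_const_add_sub_mul_div_add (c := d) hv (pow_ne_zero n (sub_ne_zero.mpr ha)) hψ
      (by rw [hφa, mul_zero])

theorem stmt12_general (d : ℝ) (hd : d ∈ Set.Ioo (0 : ℝ) 1) (n : ℕ)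
    (s : ℝ) (φ : ℝ → ℝ)
    (g : ℝ → ℝ)
    (hg : ∀ x : ℝ, g x = d + (x - d) ^ (n + 1) / ((x - d) ^ n + s * φ x)) :
    (DifferentiableAt ℝ φ 0 → φ 0 = 0 → deriv φ 0 = 0 → HasDerivAt g 1 0) ∧
    (DifferentiableAt ℝ φ 1 → φ 1 = 0 → deriv φ 1 = 0 → HasDerivAt g 1 1) := by
  obtain rfl : g = _ := funext hg
  refine ⟨fun hφ hφa hφ' => ?_, fun hφ hφa hφ' => ?_⟩
  · exact hasDerivAt_adaptiveMap n hd.1.ne (hφ.hasDerivAt.congr_deriv hφ') hφa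
  · exact hasDerivAt_adaptiveMap n hd.2.ne' (hφ.hasDerivAt.congr_deriv hφ') hφa

/-- Let `d ∈ (0,1)`, `n` a positive even integer, `s > 0`,
`φ : ℝ → ℝ`.  If `φ` is differentiable at `0` with `φ(0) = 0` and `φ′(0) = 0`,
then the generalized adaptive mapping function
`g(ω) = d + (ω − d)^{n+1}/((ω − d)ⁿ + s·φ(ω))` is differentiable at `0` with
`g′(0) = 1`; likewise, if `φ` is differentiable at `1` with `φ(1) = 0` and
`φ′(1) = 0`, then `g` is differentiable at `1` with `g′(1) = 1`. -/
theorem stmt12 (d : ℝ) (hd : d ∈ Set.Ioo (0 : ℝ) 1) (n : ℕ) (hn : 0 < n) (hne : Even n)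
    (s : ℝ) (hs : 0 < s) (φ : ℝ → ℝ)
    (g : ℝ → ℝ)
    (hg : ∀ x : ℝ, g x = d + (x - d) ^ (n + 1) / ((x - d) ^ n + s * φ x)) :
    (DifferentiableAt ℝ φ 0 → φ 0 = 0 → deriv φ 0 = 0 → HasDerivAt g 1 0) ∧
    (DifferentiableAt ℝ φ 1 → φ 1 = 0 → deriv φ 1 = 0 → HasDerivAt g 1 1) :=
  stmt12_general d hd n s φ g hg
end

section
/- Let d ∈ (0,1), let n be a positive even integer and let s > 0. If φ : ℝ → ℝ is continuous at d with φ(d) > 0, then the generalized adaptive mapping function satisfies g(ω) − d = O((ω − d)^{n+1}) as ω → d; in particular, the mapped weight agrees with the ideal weight d to order n + 1. -/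
/-- Let `d ∈ (0,1)`, `n` a positive even integer and `s > 0`.
If `φ : ℝ → ℝ` is continuous at `d` with `φ(d) > 0`, then the generalized
adaptive mapping function `g(ω) = d + (ω − d)^{n+1}/((ω − d)ⁿ + s·φ(ω))`
satisfies `g(ω) − d = O((ω − d)^{n+1})` as `ω → d`: the mapped weight agrees
with the ideal weight `d` to order `n + 1`. -/
theorem stmt13 (d : ℝ) (hd : d ∈ Set.Ioo (0 : ℝ) 1) (n : ℕ) (hn : 0 < n) (hne : Even n)
    (s : ℝ) (hs : 0 < s) (φ : ℝ → ℝ)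
    (hφc : ContinuousAt φ d) (hφd : 0 < φ d)
    (g : ℝ → ℝ)
    (hg : ∀ x : ℝ, g x = d + (x - d) ^ (n + 1) / ((x - d) ^ n + s * φ x)) :
    (fun ω : ℝ => g ω - d) =O[nhds d] fun ω : ℝ => (ω - d) ^ (n + 1) := by
  have hden : Filter.Tendsto (fun ω : ℝ => (ω - d) ^ n + s * φ ω) (nhds d)
      (nhds ((d - d) ^ n + s * φ d)) := by
    apply Filter.Tendsto.add
    · exact ((continuous_id.sub continuous_const).pow n).continuousAt
    · exact (Filter.Tendsto.const_mul s hφc)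
  have hval : (d - d) ^ n + s * φ d = s * φ d := by
    simp [zero_pow hn.ne']
  rw [hval] at hden
  have hpos : 0 < s * φ d := mul_pos hs hφd
  have hinv : Filter.Tendsto (fun ω : ℝ => ((ω - d) ^ n + s * φ ω)⁻¹) (nhds d)
      (nhds (s * φ d)⁻¹) := hden.inv₀ hpos.ne'
  have hO1 : (fun ω : ℝ => ((ω - d) ^ n + s * φ ω)⁻¹) =O[nhds d] (fun _ => (1 : ℝ)) :=
    hinv.isBigO_one ℝ
  have hOf : (fun ω : ℝ => (ω - d) ^ (n + 1)) =O[nhds d] fun ω : ℝ => (ω - d) ^ (n + 1) :=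
    Asymptotics.isBigO_refl _ _
  have := hOf.mul hO1
  simp only [mul_one] at this
  refine this.congr' ?_ (by rfl)
  filter_upwards with ω
  rw [hg ω]
  ring_nf
end

section
/- Let m ≥ 1 and n be integers with n + 1 ≥ m, and let d ∈ (0,1). For the local operator φ(ω) = (ω(1 − ω))^m, whose derivative is φ′(ω) = m(1 − 2ω)(ω(1 − ω))^{m−1}, one has for all ω ∈ [0,1]: (n+1)φ(ω) − φ′(ω)(ω − d) ≥ m(ω(1 − ω))^{m−1}·((ω − d)² + d(1 − d)) ≥ 0; i.e., the monotonicity condition (n+1)φ(ω) − φ′(ω)(ω − d) ≥ 0 holds on [0,1]. -/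
/-! With `p = ω(1 − ω)`, the monotonicity expression factors as
`p^{m−1}((n+1)p − m(1 − 2ω)(ω − d))`, and the polynomial identity
`p − (1 − 2ω)(ω − d) = (ω − d)² + d(1 − d)` turns it into
`m p^{m−1}((ω − d)² + d(1 − d)) + (n + 1 − m) p^m`, whose second summand is
nonnegative on `[0,1]` as soon as `m ≤ n + 1`. -/

open Set

theorem natCast_mul_pow_sub_one_mul {R : Type*} [CommSemiring R] (m : ℕ) (x : R) :
    (m : R) * x ^ (m - 1) * x = m * x ^ m := by
  cases m with
  | zero => simp
  | succ k => rw [Nat.add_sub_cancel, mul_assoc, ← pow_succ]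

theorem hasDerivAt_mul_one_sub_pow (m : ℕ) (ω : ℝ) :
    HasDerivAt (fun ω : ℝ => (ω * (1 - ω)) ^ m)
      ((m : ℝ) * (1 - 2 * ω) * (ω * (1 - ω)) ^ (m - 1)) ω := by
  have hbase : HasDerivAt (fun ω : ℝ => ω * (1 - ω)) (1 - 2 * ω) ω :=
    ((hasDerivAt_id' ω).fun_mul ((hasDerivAt_const ω 1).fun_sub (hasDerivAt_id' ω))).congr_deriv
      (by ring)
  exact (hbase.fun_pow m).congr_deriv (by ring)

theorem monotonicity_expr_eq (ω d : ℝ) (m : ℕ) (c : ℝ) :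
    c * (ω * (1 - ω)) ^ m - (m : ℝ) * (1 - 2 * ω) * (ω * (1 - ω)) ^ (m - 1) * (ω - d) =
      (m : ℝ) * (ω * (1 - ω)) ^ (m - 1) * ((ω - d) ^ 2 + d * (1 - d)) +
        (c - m) * (ω * (1 - ω)) ^ m := by
  linear_combination (-1 : ℝ) * natCast_mul_pow_sub_one_mul m (ω * (1 - ω))

theorem le_monotonicity_expr {ω : ℝ} (hω : ω ∈ Icc (0 : ℝ) 1) (d : ℝ) {m n : ℕ}
    (hmn : m ≤ n + 1) :
    (m : ℝ) * (ω * (1 - ω)) ^ (m - 1) * ((ω - d) ^ 2 + d * (1 - d)) ≤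
      ((n : ℝ) + 1) * (ω * (1 - ω)) ^ m -
        (m : ℝ) * (1 - 2 * ω) * (ω * (1 - ω)) ^ (m - 1) * (ω - d) := by
  have hp : 0 ≤ ω * (1 - ω) := mul_nonneg hω.1 (sub_nonneg.2 hω.2)
  have hmn' : (m : ℝ) ≤ n + 1 := by exact_mod_cast hmn
  rw [monotonicity_expr_eq]
  exact le_add_of_nonneg_right (mul_nonneg (sub_nonneg.2 hmn') (pow_nonneg hp m))

theorem stmt14_general (d : ℝ) (hd : d ∈ Set.Ioo (0 : ℝ) 1) (m n : ℕ)
    (hmn : m ≤ n + 1)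
    (φ : ℝ → ℝ) (hφ : ∀ ω : ℝ, φ ω = (ω * (1 - ω)) ^ m) :
    (∀ ω : ℝ, HasDerivAt φ ((m : ℝ) * (1 - 2 * ω) * (ω * (1 - ω)) ^ (m - 1)) ω) ∧
    (∀ ω ∈ Set.Icc (0 : ℝ) 1,
      (m : ℝ) * (ω * (1 - ω)) ^ (m - 1) * ((ω - d) ^ 2 + d * (1 - d)) ≤
        ((n : ℝ) + 1) * φ ω - ((m : ℝ) * (1 - 2 * ω) * (ω * (1 - ω)) ^ (m - 1)) * (ω - d)) ∧
    (∀ ω ∈ Set.Icc (0 : ℝ) 1,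
      0 ≤ (m : ℝ) * (ω * (1 - ω)) ^ (m - 1) * ((ω - d) ^ 2 + d * (1 - d))) := by
  obtain rfl : φ = fun ω => (ω * (1 - ω)) ^ m := funext hφ
  refine ⟨hasDerivAt_mul_one_sub_pow m, fun ω hω => le_monotonicity_expr hω d hmn,
    fun ω hω => ?_⟩
  have hp : 0 ≤ ω * (1 - ω) := mul_nonneg hω.1 (sub_nonneg.2 hω.2)
  have hd' : 0 < d * (1 - d) := mul_pos hd.1 (sub_pos.2 hd.2)
  positivity

/-- Let `m ≥ 1` and `n` be integers with `n + 1 ≥ m`, and let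
`d ∈ (0,1)`.  For the local operator `φ(ω) = (ω(1 − ω))^m`, whose derivative is
`φ′(ω) = m(1 − 2ω)(ω(1 − ω))^{m−1}`, one has for all `ω ∈ [0,1]`:
`(n+1)φ(ω) − φ′(ω)(ω − d) ≥ m(ω(1 − ω))^{m−1}·((ω − d)² + d(1 − d)) ≥ 0`;
i.e. the monotonicity condition `(n+1)φ(ω) − φ′(ω)(ω − d) ≥ 0` holds
on `[0,1]`. -/
theorem stmt14 (d : ℝ) (hd : d ∈ Set.Ioo (0 : ℝ) 1) (m n : ℕ)
    (hm : 1 ≤ m) (hmn : m ≤ n + 1)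
    (φ : ℝ → ℝ) (hφ : ∀ ω : ℝ, φ ω = (ω * (1 - ω)) ^ m) :
    (∀ ω : ℝ, HasDerivAt φ ((m : ℝ) * (1 - 2 * ω) * (ω * (1 - ω)) ^ (m - 1)) ω) ∧
    (∀ ω ∈ Set.Icc (0 : ℝ) 1,
      (m : ℝ) * (ω * (1 - ω)) ^ (m - 1) * ((ω - d) ^ 2 + d * (1 - d)) ≤
        ((n : ℝ) + 1) * φ ω - ((m : ℝ) * (1 - 2 * ω) * (ω * (1 - ω)) ^ (m - 1)) * (ω - d)) ∧
    (∀ ω ∈ Set.Icc (0 : ℝ) 1,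
      0 ≤ (m : ℝ) * (ω * (1 - ω)) ^ (m - 1) * ((ω - d) ^ 2 + d * (1 - d))) :=
  stmt14_general d hd m n hmn φ hφ
end

section
/- Let d ∈ (0,1), let n be a positive even integer, let m ≥ 1 be an integer with n ≥ m − 1, and let s > 0. Then the WENO-AIM mapping function g_AIM is monotonically nondecreasing on the interval [0,1]. -/
/-!
Write `t = ω - d` and `u = ω (1 - ω)`. The denominator `tⁿ + s uᵐ` is positive on `[0, 1]`
(`n` is even, and at `ω = d` we have `u > 0`), and the numerator of `g'` factors as
`tⁿ (tⁿ + s ((n + 1) uᵐ - t (uᵐ)'))`. On `[0, 1]` the identity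
`u - t (1 - 2ω) = (ω - d)² + d (1 - d)` gives `t u' ≤ u`, hence
`t (uᵐ)' = m u^(m-1) (t u') ≤ m uᵐ ≤ (n + 1) uᵐ`.
-/

open Set

noncomputable section

def aimDenom (d s : ℝ) (n m : ℕ) (ω : ℝ) : ℝ :=
  (ω - d) ^ n + s * (ω * (1 - ω)) ^ m

def aimMap (d s : ℝ) (n m : ℕ) (ω : ℝ) : ℝ :=
  d + (ω - d) ^ (n + 1) / aimDenom d s n m ω

def aimDenomDeriv (d s : ℝ) (n m : ℕ) (ω : ℝ) : ℝ :=
  n * (ω - d) ^ (n - 1) + s * (m * (ω * (1 - ω)) ^ (m - 1) * (1 - 2 * ω))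

end

-- No `m ≠ 0` needed: for `m = 0` both sides vanish.
lemma natCast_mul_pow_pred_mul {R : Type*} [CommSemiring R] (x : R) (m : ℕ) :
    (m : R) * x ^ (m - 1) * x = m * x ^ m := by
  cases m <;> simp [pow_succ, mul_assoc]

lemma sub_mul_one_sub_two_mul_le {d ω : ℝ} (hd : d ∈ Icc (0 : ℝ) 1) :
    (ω - d) * (1 - 2 * ω) ≤ ω * (1 - ω) := by
  nlinarith [sq_nonneg (ω - d), hd.1, hd.2]

section

variable {d s : ℝ} {n m : ℕ} {ω : ℝ}

lemma aimDenom_pos (hd : d ∈ Ioo (0 : ℝ) 1) (hn : Even n) (hs : 0 < s)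
    (hω : ω ∈ Icc (0 : ℝ) 1) : 0 < aimDenom d s n m ω := by
  have hu : 0 ≤ ω * (1 - ω) := mul_nonneg hω.1 (by linarith [hω.2])
  rcases eq_or_ne ω d with rfl | hωd
  · have hu' : 0 < ω * (1 - ω) := mul_pos hd.1 (by linarith [hd.2])
    have : 0 ≤ (ω - ω) ^ n := hn.pow_nonneg _
    unfold aimDenom
    positivity
  · have : 0 < (ω - d) ^ n := hn.pow_pos (sub_ne_zero.mpr hωd)
    unfold aimDenom
    positivity

lemma hasDerivAt_aimDenom :
    HasDerivAt (aimDenom d s n m) (aimDenomDeriv d s n m ω) ω := by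
  have ht := ((hasDerivAt_id' ω).sub_const d).fun_pow n
  have hu := ((hasDerivAt_id' ω).fun_mul ((hasDerivAt_id' ω).const_sub 1)).fun_pow m
  refine (ht.add (hu.const_mul s)).congr_deriv ?_
  unfold aimDenomDeriv
  ring

lemma hasDerivAt_aimMap (hD : aimDenom d s n m ω ≠ 0) :
    HasDerivAt (aimMap d s n m)
      (((n + 1) * (ω - d) ^ n * aimDenom d s n m ω -
          (ω - d) ^ (n + 1) * aimDenomDeriv d s n m ω) / aimDenom d s n m ω ^ 2) ω := by
  have ht := ((hasDerivAt_id' ω).sub_const d).fun_pow (n + 1)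
  refine ((ht.div hasDerivAt_aimDenom hD).const_add d).congr_deriv ?_
  push_cast
  ring

lemma aimMap_deriv_numerator_eq :
    (n + 1) * (ω - d) ^ n * aimDenom d s n m ω - (ω - d) ^ (n + 1) * aimDenomDeriv d s n m ω =
      (ω - d) ^ n * ((ω - d) ^ n + s * ((n + 1) * (ω * (1 - ω)) ^ m -
        (ω - d) * (m * (ω * (1 - ω)) ^ (m - 1) * (1 - 2 * ω)))) := by
  unfold aimDenom aimDenomDeriv
  linear_combination (-(ω - d) ^ n) * natCast_mul_pow_pred_mul (ω - d) n

lemma sub_mul_deriv_weight_le (hd : d ∈ Icc (0 : ℝ) 1) (hω : ω ∈ Icc (0 : ℝ) 1)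
    (hmn : m ≤ n + 1) :
    (ω - d) * (m * (ω * (1 - ω)) ^ (m - 1) * (1 - 2 * ω)) ≤ (n + 1) * (ω * (1 - ω)) ^ m := by
  have hu : 0 ≤ ω * (1 - ω) := mul_nonneg hω.1 (by linarith [hω.2])
  calc (ω - d) * (m * (ω * (1 - ω)) ^ (m - 1) * (1 - 2 * ω))
      = m * (ω * (1 - ω)) ^ (m - 1) * ((ω - d) * (1 - 2 * ω)) := by ring
    _ ≤ m * (ω * (1 - ω)) ^ (m - 1) * (ω * (1 - ω)) :=
        mul_le_mul_of_nonneg_left (sub_mul_one_sub_two_mul_le hd) (by positivity)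
    _ = m * (ω * (1 - ω)) ^ m := natCast_mul_pow_pred_mul _ m
    _ ≤ (n + 1) * (ω * (1 - ω)) ^ m :=
        mul_le_mul_of_nonneg_right (by exact_mod_cast hmn) (by positivity)

lemma aimMap_deriv_numerator_nonneg (hd : d ∈ Icc (0 : ℝ) 1) (hn : Even n) (hs : 0 ≤ s)
    (hmn : m ≤ n + 1) (hω : ω ∈ Icc (0 : ℝ) 1) :
    0 ≤ (n + 1) * (ω - d) ^ n * aimDenom d s n m ω -
      (ω - d) ^ (n + 1) * aimDenomDeriv d s n m ω := by
  rw [aimMap_deriv_numerator_eq]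
  have htn : 0 ≤ (ω - d) ^ n := hn.pow_nonneg _
  have := sub_nonneg.mpr (sub_mul_deriv_weight_le (n := n) hd hω hmn)
  positivity

theorem monotoneOn_aimMap (hd : d ∈ Ioo (0 : ℝ) 1) (hn : Even n) (hmn : m ≤ n + 1)
    (hs : 0 < s) : MonotoneOn (aimMap d s n m) (Icc 0 1) := by
  have hderiv : ∀ ω ∈ Icc (0 : ℝ) 1, HasDerivAt (aimMap d s n m) _ ω := fun ω hω =>
    hasDerivAt_aimMap (aimDenom_pos hd hn hs hω).ne'
  refine monotoneOn_of_hasDerivWithinAt_nonneg (convex_Icc 0 1)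
    (fun ω hω => (hderiv ω hω).continuousAt.continuousWithinAt)
    (fun ω hω => (hderiv ω (interior_subset hω)).hasDerivWithinAt) fun ω hω => ?_
  exact div_nonneg (aimMap_deriv_numerator_nonneg (Ioo_subset_Icc_self hd) hn hs.le hmn
    (interior_subset hω)) (sq_nonneg _)

end

theorem stmt15_general (d : ℝ) (hd : d ∈ Set.Ioo (0 : ℝ) 1) (n m : ℕ)
    (hne : Even n) (hmn : m ≤ n + 1)
    (s : ℝ) (hs : 0 < s)
    (gAIM : ℝ → ℝ)
    (hgAIM : ∀ ω : ℝ, gAIM ω =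
      d + (ω - d) ^ (n + 1) / ((ω - d) ^ n + s * (ω * (1 - ω)) ^ m)) :
    MonotoneOn gAIM (Set.Icc (0 : ℝ) 1) := by
  obtain rfl : gAIM = aimMap d s n m := funext hgAIM
  exact monotoneOn_aimMap hd hne hmn hs

/-- Let `d ∈ (0,1)`, `n` a positive even integer, `m ≥ 1` an
integer with `n ≥ m − 1`, and `s > 0`.  Then the WENO-AIM mapping function
`g_AIM(ω) = d + (ω − d)^{n+1}/((ω − d)ⁿ + s(ω(1 − ω))^m)` is monotonically
nondecreasing on the interval `[0,1]`. -/
theorem stmt15 (d : ℝ) (hd : d ∈ Set.Ioo (0 : ℝ) 1) (n m : ℕ)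
    (hn : 0 < n) (hne : Even n) (hm : 1 ≤ m) (hmn : m ≤ n + 1)
    (s : ℝ) (hs : 0 < s)
    (gAIM : ℝ → ℝ)
    (hgAIM : ∀ ω : ℝ, gAIM ω =
      d + (ω - d) ^ (n + 1) / ((ω - d) ^ n + s * (ω * (1 - ω)) ^ m)) :
    MonotoneOn gAIM (Set.Icc (0 : ℝ) 1) :=
  stmt15_general d hd n m hne hmn s hs gAIM hgAIM
end

section
/- Let f : ℝ → ℝ be six times continuously differentiable and let x ∈ ℝ. Define the middle-stencil smoothness indicator β₁(h) = (13/12)·(f(x − h) − 2f(x) + f(x + h))² + (1/4)·(f(x − h) − f(x + h))². Then, as h → 0, β₁(h) − [f′(x)²·h² + ((13/12)·f″(x)² + (1/3)·f′(x)·f‴(x))·h⁴] = O(h⁶). -/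
open Set Filter Asymptotics

private lemma idw_eq (g : ℝ → ℝ) (hg : ContDiff ℝ 6 g) {a b : ℝ} (hab : a < b)
    {k : ℕ} (hk : k ≤ 6) {y : ℝ} (hy : y ∈ Set.Icc a b) :
    iteratedDerivWithin k g (Set.Icc a b) y = iteratedDeriv k g y := by
  have H : HasFTaylorSeriesUpTo (6 : ℕ∞) g (ftaylorSeries ℝ g) :=
    contDiff_iff_ftaylorSeries.mp hg
  have H' : HasFTaylorSeriesUpToOn (6 : ℕ∞) g (ftaylorSeries ℝ g) (Set.Icc a b) :=
    (hasFTaylorSeriesUpToOn_univ_iff.mpr H).mono (Set.subset_univ _)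
  have h2 := H'.eq_iteratedFDerivWithin_of_uniqueDiffOn (m := k) (by exact_mod_cast hk)
      (uniqueDiffOn_Icc hab) hy
  rw [iteratedDerivWithin, ← h2]
  rfl

private lemma taylor_right (g : ℝ → ℝ) (hg : ContDiff ℝ 6 g) :
    ∃ C : ℝ, ∀ t ∈ Set.Icc (0:ℝ) 1,
      |g t - ∑ k ∈ Finset.range 6, iteratedDeriv k g 0 * t ^ k / (k.factorial : ℝ)|
        ≤ C * t ^ 6 := by
  have hg' : ContDiffOn ℝ (5 + 1 : ℕ) g (Set.Icc 0 1) := by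
    exact_mod_cast hg.contDiffOn
  obtain ⟨C, hC⟩ := exists_taylor_mean_remainder_bound (n := 5) zero_le_one hg'
  refine ⟨C, fun t ht => ?_⟩
  have h1 := hC t ht
  rw [taylor_within_apply] at h1
  have h2 : ∀ k ∈ Finset.range 6,
      (((k.factorial : ℝ))⁻¹ * (t - 0) ^ k) • iteratedDerivWithin k g (Set.Icc 0 1) 0
        = iteratedDeriv k g 0 * t ^ k / (k.factorial : ℝ) := by
    intro k hk
    rw [idw_eq g hg zero_lt_one (by simp at hk; omega) (Set.left_mem_Icc.mpr zero_le_one)]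
    simp [smul_eq_mul]
    ring
  rw [Finset.sum_congr rfl h2] at h1
  simpa [Real.norm_eq_abs] using h1

private lemma taylor_two (g : ℝ → ℝ) (hg : ContDiff ℝ 6 g) :
    (fun t => g t - ∑ k ∈ Finset.range 6, iteratedDeriv k g 0 * t ^ k / (k.factorial : ℝ))
      =O[nhds 0] fun t => t ^ 6 := by
  obtain ⟨C, hC⟩ := taylor_right g hg
  have hg2 : ContDiff ℝ 6 (fun t => g (-t)) := hg.comp contDiff_neg
  obtain ⟨C', hC'⟩ := taylor_right _ hg2
  rw [Asymptotics.isBigO_iff]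
  refine ⟨max C C', ?_⟩
  filter_upwards [Icc_mem_nhds (by norm_num : (-1:ℝ) < 0) (by norm_num : (0:ℝ) < 1)] with t ht
  have ht6 : (0:ℝ) ≤ t ^ 6 := by positivity
  have hnorm : ‖t ^ 6‖ = t ^ 6 := by rw [Real.norm_eq_abs, abs_of_nonneg ht6]
  rcases le_or_gt 0 t with h0 | h0
  · have := hC t ⟨h0, ht.2⟩
    rw [Real.norm_eq_abs, hnorm]
    calc |g t - ∑ k ∈ Finset.range 6, iteratedDeriv k g 0 * t ^ k / (k.factorial : ℝ)|
        ≤ C * t ^ 6 := this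
      _ ≤ max C C' * t ^ 6 := mul_le_mul_of_nonneg_right (le_max_left _ _) ht6
  · have hmem : -t ∈ Set.Icc (0:ℝ) 1 := ⟨by linarith, by linarith [ht.1]⟩
    have h1 := hC' (-t) hmem
    have hsum : ∀ k ∈ Finset.range 6,
        iteratedDeriv k (fun s => g (-s)) 0 * (-t) ^ k / (k.factorial : ℝ)
          = iteratedDeriv k g 0 * t ^ k / (k.factorial : ℝ) := by
      intro k _
      rw [iteratedDeriv_comp_neg, neg_zero, smul_eq_mul]
      have : (-1 : ℝ) ^ k * iteratedDeriv k g 0 * (-t) ^ k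
          = iteratedDeriv k g 0 * ((-1) * -t) ^ k := by
        rw [mul_pow]; ring
      rw [this, neg_one_mul, neg_neg]
    rw [Finset.sum_congr rfl hsum, neg_neg] at h1
    have hpow : (-t) ^ 6 = t ^ 6 := by ring
    rw [hpow] at h1
    rw [Real.norm_eq_abs, hnorm]
    calc |g t - ∑ k ∈ Finset.range 6, iteratedDeriv k g 0 * t ^ k / (k.factorial : ℝ)|
        ≤ C' * t ^ 6 := h1
      _ ≤ max C C' * t ^ 6 := mul_le_mul_of_nonneg_right (le_max_right _ _) ht6

set_option maxHeartbeats 1000000 in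
/-- Let `f : ℝ → ℝ` be six times continuously differentiable and
`x ∈ ℝ`.  Define the middle-stencil smoothness indicator
`β₁(h) = (13/12)·(f(x − h) − 2f(x) + f(x + h))² + (1/4)·(f(x − h) − f(x + h))²`.
Then, as `h → 0`,
`β₁(h) − [f′(x)²·h² + ((13/12)·f″(x)² + (1/3)·f′(x)·f‴(x))·h⁴] = O(h⁶)`. -/
theorem stmt19 (f : ℝ → ℝ) (hf : ContDiff ℝ 6 f) (x : ℝ)
    (β₁ : ℝ → ℝ)
    (hβ₁ : ∀ h : ℝ, β₁ h =
      13 / 12 * (f (x - h) - 2 * f x + f (x + h)) ^ 2 +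
        1 / 4 * (f (x - h) - f (x + h)) ^ 2) :
    (fun h : ℝ => β₁ h -
        (deriv f x ^ 2 * h ^ 2 +
          (13 / 12 * (iteratedDeriv 2 f x) ^ 2 +
            1 / 3 * deriv f x * iteratedDeriv 3 f x) * h ^ 4))
      =O[nhds 0] fun h : ℝ => h ^ 6 := by
  -- abbreviations for the derivatives at x
  obtain ⟨a1, a2, a3, a4, a5, ha1, ha2, ha3, ha4, ha5⟩ :
      ∃ a1 a2 a3 a4 a5 : ℝ, deriv f x = a1 ∧ iteratedDeriv 2 f x = a2 ∧
        iteratedDeriv 3 f x = a3 ∧ iteratedDeriv 4 f x = a4 ∧ iteratedDeriv 5 f x = a5 :=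
    ⟨_, _, _, _, _, rfl, rfl, rfl, rfl, rfl⟩
  set P : ℝ → ℝ := fun t => f x + a1*t + a2/2*t^2 + a3/6*t^3 + a4/24*t^4 + a5/120*t^5 with hP
  have hgp : ContDiff ℝ 6 (fun t => f (x + t)) :=
    hf.comp (contDiff_const.add contDiff_id)
  have hcoefp : ∀ k : ℕ, iteratedDeriv k (fun t => f (x + t)) 0 = iteratedDeriv k f x := by
    intro k
    rw [iteratedDeriv_comp_const_add]
    simp
  -- Taylor expansion of f(x+h)
  have hEp : (fun h : ℝ => f (x + h) - P h) =O[nhds 0] fun h : ℝ => h ^ 6 := by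
    have h1 := taylor_two _ hgp
    have h2 : ∀ t : ℝ, ∑ k ∈ Finset.range 6,
        iteratedDeriv k (fun t => f (x + t)) 0 * t ^ k / (k.factorial : ℝ) = P t := by
      intro t
      simp only [Finset.sum_range_succ, Finset.sum_range_zero, hcoefp]
      simp only [hP]
      rw [show iteratedDeriv 0 f x = f x from by simp,
        show iteratedDeriv 1 f x = deriv f x from congrFun iteratedDeriv_one x, ha1, ha2, ha3, ha4, ha5]
      norm_num [Nat.factorial]
      ring
    refine h1.congr_left fun t => by rw [h2]
  -- Taylor expansion of f(x-h)
  have hgm : ContDiff ℝ 6 (fun t => f (x + -t)) := hgp.comp contDiff_neg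
  have hEm : (fun h : ℝ => f (x - h) - P (-h)) =O[nhds 0] fun h : ℝ => h ^ 6 := by
    have h1 := taylor_two _ hgm
    have h2 : ∀ t : ℝ, ∑ k ∈ Finset.range 6,
        iteratedDeriv k (fun t => f (x + -t)) 0 * t ^ k / (k.factorial : ℝ) = P (-t) := by
      intro t
      have hc : ∀ k : ℕ, iteratedDeriv k (fun t => f (x + -t)) 0
          = (-1 : ℝ) ^ k * iteratedDeriv k f x := by
        intro k
        rw [iteratedDeriv_comp_neg (f := fun t => f (x + t)), neg_zero, hcoefp, smul_eq_mul]
      simp only [Finset.sum_range_succ, Finset.sum_range_zero, hc]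
      simp only [hP]
      rw [show iteratedDeriv 0 f x = f x from by simp,
        show iteratedDeriv 1 f x = deriv f x from congrFun iteratedDeriv_one x, ha1, ha2, ha3, ha4, ha5]
      norm_num [Nat.factorial]
      ring
    have h3 : ∀ t : ℝ, f (x + -t) = f (x - t) := fun t => by rw [sub_eq_add_neg]
    refine h1.congr_left fun t => by rw [h2, h3]
  -- the two stencil differences and their polynomial parts
  set u : ℝ → ℝ := fun h => f (x - h) - 2 * f x + f (x + h) with hu
  set v : ℝ → ℝ := fun h => f (x - h) - f (x + h) with hv
  set p : ℝ → ℝ := fun h => a2*h^2 + a4/12*h^4 with hp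
  set q : ℝ → ℝ := fun h => -(2*a1*h) - a3/3*h^3 - a5/60*h^5 with hq
  have hU : (fun h : ℝ => u h - p h) =O[nhds 0] fun h : ℝ => h ^ 6 := by
    refine (hEm.add hEp).congr_left fun h => ?_
    simp only [hu, hp, hP]; ring
  have hV : (fun h : ℝ => v h - q h) =O[nhds 0] fun h : ℝ => h ^ 6 := by
    refine (hEm.sub hEp).congr_left fun h => ?_
    simp only [hv, hq, hP]; ring
  -- boundedness of the "sum" factors near 0
  have hcont : Continuous f := hf.continuous
  have hcu : Continuous u := by
    apply Continuous.add
    · exact (hcont.comp (continuous_const.sub continuous_id)).sub continuous_const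
    · exact hcont.comp (continuous_const.add continuous_id)
  have hcv : Continuous v := by
    exact (hcont.comp (continuous_const.sub continuous_id)).sub
      (hcont.comp (continuous_const.add continuous_id))
  have hcp : Continuous p := by simp only [hp]; fun_prop
  have hcq : Continuous q := by simp only [hq]; fun_prop
  have hb1 : (fun h : ℝ => 13/12 * (u h + p h)) =O[nhds 0] fun _ : ℝ => (1:ℝ) :=
    (((hcu.add hcp).const_smul (13/12 : ℝ)).tendsto 0).isBigO_one ℝ
  have hb2 : (fun h : ℝ => 1/4 * (v h + q h)) =O[nhds 0] fun _ : ℝ => (1:ℝ) :=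
    (((hcv.add hcq).const_smul (1/4 : ℝ)).tendsto 0).isBigO_one ℝ
  have hF1 : (fun h : ℝ => (u h - p h) * (13/12 * (u h + p h))) =O[nhds 0]
      fun h : ℝ => h ^ 6 := by
    have := hU.mul hb1
    simpa using this
  have hF2 : (fun h : ℝ => (v h - q h) * (1/4 * (v h + q h))) =O[nhds 0]
      fun h : ℝ => h ^ 6 := by
    have := hV.mul hb2
    simpa using this
  -- the purely polynomial part
  set R : ℝ → ℝ := fun h => 13/72*a2*a4 + a3^2/36 + a1*a5/60
      + (13/1728*a4^2 + a3*a5/360)*h^2 + a5^2/14400*h^4 with hRdef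
  have hcR : Continuous R := by simp only [hRdef]; fun_prop
  have hF3 : (fun h : ℝ => 13/12 * (p h)^2 + 1/4 * (q h)^2 -
      (a1 ^ 2 * h ^ 2 + (13 / 12 * a2 ^ 2 + 1 / 3 * a1 * a3) * h ^ 4))
      =O[nhds 0] fun h : ℝ => h ^ 6 := by
    have h1 : (fun h : ℝ => h ^ 6 * R h) =O[nhds 0] fun h : ℝ => h ^ 6 := by
      have := (isBigO_refl (fun h : ℝ => h ^ 6) (nhds 0)).mul ((hcR.tendsto 0).isBigO_one ℝ)
      simpa using this
    refine h1.congr_left fun h => ?_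
    simp only [hp, hq, hRdef]; ring
  -- put everything together
  have := (hF1.add hF2).add hF3
  refine this.congr_left fun h => ?_
  rw [hβ₁, ha1, ha2, ha3]
  simp only [hu, hv]
  ring
end
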